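/- (Overlap of purification derivatives.) Let ψ(φ) = (S(φ) ⊗ I) Γ be the canonical purification of ρ(φ), where S(φ) = U(φ)(e^{−G/2}/√Z)U(φ)† and Γ_{(k,ℓ)} = δ_{kℓ}. Then for all i, j ∈ {1,…,J}, the partial derivatives ∂_iψ(φ) = i([S(φ), B_i] ⊗ I)Γ satisfy ⟨∂_i ψ(φ), ∂_j ψ(φ)⟩ = Tr[{A_i, A_j} ρ] − 2 · Tr[A_i √ρ A_j √ρ], where √ρ = e^{−G/2}/√Z, A_j = U_{R_j}† H_j U_{R_j}, B_j = U_{L_{j+1}} H_j U_{L_{j+1}}†, {X,Y} = XY + YX, and ⟨·,·⟩ is the standard inner product on pair-indexed complex vectors (conjugate-linear in the first argument). -/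

import Mathlib

open Matrix

noncomputable section

attribute [local instance] Matrix.linftyOpNormedAddCommGroup Matrix.linftyOpNormedSpace

/-- Square complex matrices of size `d`. -/
abbrev Mat (d : ℕ) := Matrix (Fin d) (Fin d) ℂ

/-- Descending product `f (a + n - 1) * ⋯ * f (a + 1) * f a` (empty product is `1`). -/
def descProd {d : ℕ} (f : ℕ → Mat d) (a : ℕ) : ℕ → Mat d
  | 0 => 1
  | n + 1 => f (a + n) * descProd f a n

/-- The `j`-th layer `U_j(φ_j) = exp (−i φ_j H_j) V_j`. -/
def layer {d : ℕ} (H V : ℕ → Mat d) (φ : ℕ → ℝ) (j : ℕ) : Mat d :=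
  NormedSpace.exp ((-(Complex.I * (φ j : ℂ))) • H j) * V j

/-- `U_{R_j} = U_j ⋯ U_1`. -/
def UR {d : ℕ} (H V : ℕ → Mat d) (φ : ℕ → ℝ) (j : ℕ) : Mat d :=
  descProd (layer H V φ) 1 j

/-- `U_{L_j} = U_J ⋯ U_j`. -/
def UL {d : ℕ} (H V : ℕ → Mat d) (φ : ℕ → ℝ) (J j : ℕ) : Mat d :=
  descProd (layer H V φ) j (J + 1 - j)

/-- The full layered circuit `U(φ) = U_J ⋯ U_1`. -/
def Ufull {d : ℕ} (H V : ℕ → Mat d) (φ : ℕ → ℝ) (J : ℕ) : Mat d :=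
  UR H V φ J

/-- `B_j = U_{L_{j+1}} H_j U_{L_{j+1}}†`. -/
def Bmat {d : ℕ} (H V : ℕ → Mat d) (φ : ℕ → ℝ) (J j : ℕ) : Mat d :=
  UL H V φ J (j + 1) * H j * (UL H V φ J (j + 1))ᴴ

/-- `A_j = U_{R_j}† H_j U_{R_j}`. -/
def Amat {d : ℕ} (H V : ℕ → Mat d) (φ : ℕ → ℝ) (j : ℕ) : Mat d :=
  (UR H V φ j)ᴴ * H j * UR H V φ j

/-- The thermal state `ρ = e^{−G}/Z`. -/
def thermal {d : ℕ} (G : Mat d) (Z : ℝ) : Mat d :=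
  (Z : ℂ)⁻¹ • NormedSpace.exp (-G)

/-- The parameterized state `ρ(φ) = U(φ) ρ U(φ)†`. -/
def rhoFun {d : ℕ} (H V : ℕ → Mat d) (J : ℕ) (G : Mat d) (Z : ℝ) (φ : ℕ → ℝ) : Mat d :=
  Ufull H V φ J * thermal G Z * (Ufull H V φ J)ᴴ

/-- The sesquilinear form `⟨u| M |v⟩`, conjugate-linear in `u`. -/
def braket {d : ℕ} (u : Fin d → ℂ) (M : Mat d) (v : Fin d → ℂ) : ℂ :=
  star u ⬝ᵥ M.mulVec v

open scoped Kronecker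

/-- `√ρ = e^{−G/2}/√Z`, the square root of the thermal state. -/
def sqrtThermal {d : ℕ} (G : Mat d) (Z : ℝ) : Mat d :=
  ((Real.sqrt Z : ℂ))⁻¹ • NormedSpace.exp ((-(2⁻¹ : ℂ)) • G)

/-- `S(φ) = U(φ) (e^{−G/2}/√Z) U(φ)†`, the square root of `ρ(φ)`. -/
def sqrtRhoFun {d : ℕ} (H V : ℕ → Mat d) (J : ℕ) (G : Mat d) (Z : ℝ) (φ : ℕ → ℝ) : Mat d :=
  Ufull H V φ J * sqrtThermal G Z * (Ufull H V φ J)ᴴ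

/-- The (unnormalized) maximally entangled vector `Γ_{(k,ℓ)} = δ_{kℓ}`. -/
def GammaVec (d : ℕ) : Fin d × Fin d → ℂ :=
  fun p => if p.1 = p.2 then 1 else 0

/-- The partial derivative `∂_j ψ(φ) = i ([S(φ), B_j] ⊗ I) Γ` of the canonical purification. -/
def purificationDeriv {d : ℕ} (H V : ℕ → Mat d) (J : ℕ) (G : Mat d) (Z : ℝ) (φ : ℕ → ℝ)
    (j : ℕ) : Fin d × Fin d → ℂ :=
  Complex.I •
    (((sqrtRhoFun H V J G Z φ * Bmat H V φ J j -
        Bmat H V φ J j * sqrtRhoFun H V J G Z φ) ⊗ₖ (1 : Mat d)).mulVec (GammaVec d))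

/-!
Since `(M ⊗ I) Γ = vec Mᵀ`, the overlap `⟨(M ⊗ I) Γ, (N ⊗ I) Γ⟩` is the Hilbert–Schmidt product
`Tr[M† N]`. Splitting `U = U_{L_{k+1}} U_{R_k}` shows `B_k = U A_k U†`, so `[S, B_k]` is the
`U`-conjugate of `[√ρ, A_k]`, and unitary invariance of the trace reduces the overlap to
`Tr[[A_i, √ρ] [√ρ, A_j]]`; expanding and cycling under the trace, with `√ρ √ρ = ρ`, gives the
formula.
-/

section UnitaryConj

variable {n R : Type*} [Fintype n] [DecidableEq n] [CommRing R] [StarRing R]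
  {U : Matrix n n R}

theorem Matrix.trace_unitary_conj (hU : U ∈ unitaryGroup n R) (X : Matrix n n R) :
    (U * X * Uᴴ).trace = X.trace := by
  rw [trace_mul_cycle, ← star_eq_conjTranspose, mem_unitaryGroup_iff'.mp hU, one_mul]

theorem Matrix.unitary_conj_commutator (hU : U ∈ unitaryGroup n R) (T A : Matrix n n R) :
    (U * T * Uᴴ) * (U * A * Uᴴ) - (U * A * Uᴴ) * (U * T * Uᴴ) = U * (T * A - A * T) * Uᴴ := by
  let conjU := Unitary.conjStarAlgAut R (Matrix n n R) ⟨U, hU⟩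
  change conjU T * conjU A - conjU A * conjU T = conjU (T * A - A * T)
  rw [map_sub, map_mul, map_mul]

theorem Matrix.conjTranspose_unitary_conj_mul (hU : U ∈ unitaryGroup n R) (M N : Matrix n n R) :
    (U * M * Uᴴ)ᴴ * (U * N * Uᴴ) = U * (Mᴴ * N) * Uᴴ := by
  let conjU := Unitary.conjStarAlgAut R (Matrix n n R) ⟨U, hU⟩
  change star (conjU M) * conjU N = conjU (star M * N)
  rw [map_mul, map_star]

end UnitaryConj

theorem Matrix.trace_commutator_mul_commutator {n R : Type*} [Fintype n] [CommRing R]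
    (A B T : Matrix n n R) :
    ((A * T - T * A) * (T * B - B * T)).trace =
      ((A * B + B * A) * (T * T)).trace - 2 * (A * T * B * T).trace := by
  have expand : (A * T - T * A) * (T * B - B * T) =
      A * (T * T) * B + T * (A * B) * T - A * T * B * T - T * (A * T * B) := by
    noncomm_ring
  rw [expand, trace_sub, trace_sub, trace_add, trace_mul_cycle A, trace_mul_cycle T,
    trace_mul_comm T, trace_mul_comm (T * T), add_mul, trace_add]
  ring

theorem Matrix.exp_mem_unitaryGroup_of_mem_skewAdjoint {m 𝔸 : Type*} [Fintype m] [DecidableEq m]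
    [NormedCommRing 𝔸] [NormedAlgebra ℚ 𝔸] [CompleteSpace 𝔸] [StarRing 𝔸] [ContinuousStar 𝔸]
    {A : Matrix m m 𝔸} (hA : A ∈ skewAdjoint (Matrix m m 𝔸)) :
    NormedSpace.exp A ∈ unitaryGroup m 𝔸 := by
  rw [mem_unitaryGroup_iff, star_eq_conjTranspose, ← exp_conjTranspose, ← star_eq_conjTranspose,
    skewAdjoint.mem_iff.mp hA, ← exp_add_of_commute _ _ (Commute.refl A).neg_right,
    add_neg_cancel, NormedSpace.exp_zero]

theorem GammaVec_eq_vec_one (d : ℕ) : GammaVec d = vec (1 : Mat d) := by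
  ext ⟨k, l⟩
  simp [GammaVec, one_apply, eq_comm]

theorem star_kronecker_one_mulVec_GammaVec_dotProduct {d : ℕ} (M N : Mat d) :
    star ((M ⊗ₖ (1 : Mat d)) *ᵥ GammaVec d) ⬝ᵥ ((N ⊗ₖ (1 : Mat d)) *ᵥ GammaVec d) =
      (Mᴴ * N).trace := by
  simp only [GammaVec_eq_vec_one, kronecker_mulVec_vec, one_mul]
  rw [star_vec_dotProduct_vec, conjTranspose_transpose_eq_transpose_conjTranspose,
    trace_transpose_mul]

section Circuit

variable {d : ℕ}

theorem descProd_add (f : ℕ → Mat d) (a m n : ℕ) :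
    descProd f a (m + n) = descProd f (a + m) n * descProd f a m := by
  induction n with
  | zero => simp [descProd]
  | succ n ih => rw [← add_assoc, descProd, ih, descProd, add_assoc a, mul_assoc]

theorem descProd_mem_unitaryGroup {f : ℕ → Mat d} (hf : ∀ k, f k ∈ unitaryGroup (Fin d) ℂ)
    (a n : ℕ) : descProd f a n ∈ unitaryGroup (Fin d) ℂ := by
  induction n with
  | zero => exact one_mem _
  | succ n ih => exact mul_mem (hf _) ih

variable {H V : ℕ → Mat d}

theorem layer_mem_unitaryGroup (hH : ∀ k, (H k).IsHermitian)
    (hV : ∀ k, V k ∈ unitaryGroup (Fin d) ℂ) (φ : ℕ → ℝ) (k : ℕ) :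
    layer H V φ k ∈ unitaryGroup (Fin d) ℂ := by
  refine mul_mem (exp_mem_unitaryGroup_of_mem_skewAdjoint ?_) (hV k)
  refine (hH k).isSelfAdjoint.smul_mem_skewAdjoint ?_
  simp [skewAdjoint.mem_iff, Complex.conj_I]

theorem UR_mem_unitaryGroup (hH : ∀ k, (H k).IsHermitian)
    (hV : ∀ k, V k ∈ unitaryGroup (Fin d) ℂ) (φ : ℕ → ℝ) (k : ℕ) :
    UR H V φ k ∈ unitaryGroup (Fin d) ℂ :=
  descProd_mem_unitaryGroup (layer_mem_unitaryGroup hH hV φ) 1 k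

theorem Ufull_mem_unitaryGroup (hH : ∀ k, (H k).IsHermitian)
    (hV : ∀ k, V k ∈ unitaryGroup (Fin d) ℂ) (φ : ℕ → ℝ) (J : ℕ) :
    Ufull H V φ J ∈ unitaryGroup (Fin d) ℂ :=
  UR_mem_unitaryGroup hH hV φ J

theorem UL_mul_UR (φ : ℕ → ℝ) {J k : ℕ} (hk : k ≤ J) :
    UL H V φ J (k + 1) * UR H V φ k = Ufull H V φ J := by
  obtain ⟨m, rfl⟩ := Nat.exists_eq_add_of_le hk
  rw [Ufull, UR, UL, UR, descProd_add, add_comm 1 k, Nat.add_right_comm, Nat.add_sub_cancel_left]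

theorem Bmat_eq_unitary_conj_Amat (hH : ∀ k, (H k).IsHermitian)
    (hV : ∀ k, V k ∈ unitaryGroup (Fin d) ℂ) (φ : ℕ → ℝ) {J k : ℕ} (hk : k ≤ J) :
    Bmat H V φ J k = Ufull H V φ J * Amat H V φ k * (Ufull H V φ J)ᴴ := by
  have hR : UR H V φ k * (UR H V φ k)ᴴ = 1 :=
    mem_unitaryGroup_iff.mp (UR_mem_unitaryGroup hH hV φ k)
  rw [← UL_mul_UR φ hk, Bmat, Amat, conjTranspose_mul]
  set L := UL H V φ J (k + 1)
  set R := UR H V φ k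
  calc L * H k * Lᴴ = L * (R * Rᴴ) * H k * (R * Rᴴ) * Lᴴ := by rw [hR, mul_one, mul_one]
    _ = L * R * (Rᴴ * H k * R) * (Rᴴ * Lᴴ) := by noncomm_ring

theorem Amat_isHermitian (hH : ∀ k, (H k).IsHermitian) (V : ℕ → Mat d) (φ : ℕ → ℝ) (k : ℕ) :
    (Amat H V φ k).IsHermitian :=
  isHermitian_conjTranspose_mul_mul _ (hH k)

end Circuit

theorem sqrtThermal_isHermitian {d : ℕ} {G : Mat d} (hG : G.IsHermitian) (Z : ℝ) :
    (sqrtThermal G Z).IsHermitian :=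
  (hG.smul (by simp [IsSelfAdjoint])).exp.smul (by simp [IsSelfAdjoint])

theorem sqrtThermal_mul_self {d : ℕ} (G : Mat d) {Z : ℝ} (hZ : 0 ≤ Z) :
    sqrtThermal G Z * sqrtThermal G Z = thermal G Z := by
  rw [sqrtThermal, thermal, smul_mul_smul_comm,
    ← exp_add_of_commute _ _ (Commute.refl _), ← add_smul, ← mul_inv, ← Complex.ofReal_mul,
    Real.mul_self_sqrt hZ]
  norm_num

theorem purificationDeriv_eq {d J : ℕ} {H V : ℕ → Mat d} (hH : ∀ k, (H k).IsHermitian)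
    (hV : ∀ k, V k ∈ unitaryGroup (Fin d) ℂ) (G : Mat d) (Z : ℝ)
    (φ : ℕ → ℝ) {k : ℕ} (hk : k ≤ J) :
    purificationDeriv H V J G Z φ k = Complex.I •
      ((Ufull H V φ J * (sqrtThermal G Z * Amat H V φ k - Amat H V φ k * sqrtThermal G Z) *
        (Ufull H V φ J)ᴴ) ⊗ₖ (1 : Mat d)) *ᵥ GammaVec d := by
  rw [purificationDeriv, sqrtRhoFun, Bmat_eq_unitary_conj_Amat hH hV φ hk,
    unitary_conj_commutator (Ufull_mem_unitaryGroup hH hV φ J)]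

theorem star_purificationDeriv_dotProduct {d J : ℕ} {H V : ℕ → Mat d}
    (hH : ∀ k, (H k).IsHermitian) (hV : ∀ k, V k ∈ unitaryGroup (Fin d) ℂ) (G : Mat d) (Z : ℝ)
    (φ : ℕ → ℝ) {i j : ℕ} (hiJ : i ≤ J) (hjJ : j ≤ J) :
    star (purificationDeriv H V J G Z φ i) ⬝ᵥ purificationDeriv H V J G Z φ j =
      ((sqrtThermal G Z * Amat H V φ i - Amat H V φ i * sqrtThermal G Z)ᴴ *
        (sqrtThermal G Z * Amat H V φ j - Amat H V φ j * sqrtThermal G Z)).trace := by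
  have hU := Ufull_mem_unitaryGroup hH hV φ J
  have hI : star Complex.I * Complex.I = 1 := by
    rw [Complex.star_def, Complex.conj_I, neg_mul, Complex.I_mul_I, neg_neg]
  rw [purificationDeriv_eq hH hV G Z φ hiJ, purificationDeriv_eq hH hV G Z φ hjJ, star_smul,
    smul_dotProduct, dotProduct_smul, smul_smul, hI, one_smul,
    star_kronecker_one_mulVec_GammaVec_dotProduct, conjTranspose_unitary_conj_mul hU,
    trace_unitary_conj hU]

theorem purification_deriv_overlap_general {d J : ℕ}
    (H V G : _) (hH : ∀ j, (H j : Mat d).IsHermitian)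
    (hV : ∀ j, V j ∈ Matrix.unitaryGroup (Fin d) ℂ)
    (hG : (G : Mat d).IsHermitian)
    (Z : ℝ) (hZpos : 0 < Z)
    (φ : ℕ → ℝ) (i j : ℕ) (hiJ : i ≤ J) (hjJ : j ≤ J) :
    star (purificationDeriv H V J G Z φ i) ⬝ᵥ purificationDeriv H V J G Z φ j =
      ((Amat H V φ i * Amat H V φ j + Amat H V φ j * Amat H V φ i) * thermal G Z).trace -
        2 * (Amat H V φ i * sqrtThermal G Z * Amat H V φ j * sqrtThermal G Z).trace := by
  have hT := sqrtThermal_isHermitian hG Z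
  have hAi := Amat_isHermitian hH V φ i
  rw [star_purificationDeriv_dotProduct hH hV G Z φ hiJ hjJ, conjTranspose_sub, conjTranspose_mul,
    conjTranspose_mul, hT.eq, hAi.eq, trace_commutator_mul_commutator,
    sqrtThermal_mul_self G hZpos.le]

/-- Overlap of purification derivatives:
`⟨∂_i ψ(φ), ∂_j ψ(φ)⟩ = Tr[{A_i, A_j} ρ] − 2 Tr[A_i √ρ A_j √ρ]`. -/
theorem purification_deriv_overlap {d J : ℕ} (hd : 1 ≤ d)
    (H V G : _) (hH : ∀ j, (H j : Mat d).IsHermitian)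
    (hV : ∀ j, V j ∈ Matrix.unitaryGroup (Fin d) ℂ)
    (hG : (G : Mat d).IsHermitian)
    (Z : ℝ) (hZpos : 0 < Z) (hZ : (NormedSpace.exp (-G)).trace = (Z : ℂ))
    (φ : ℕ → ℝ) (i j : ℕ) (hi1 : 1 ≤ i) (hiJ : i ≤ J) (hj1 : 1 ≤ j) (hjJ : j ≤ J) :
    star (purificationDeriv H V J G Z φ i) ⬝ᵥ purificationDeriv H V J G Z φ j =
      ((Amat H V φ i * Amat H V φ j + Amat H V φ j * Amat H V φ i) * thermal G Z).trace -
        2 * (Amat H V φ i * sqrtThermal G Z * Amat H V φ j * sqrtThermal G Z).trace :=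
  purification_deriv_overlap_general H V G hH hV hG Z hZpos φ i j hiJ hjJ
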